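/- In the abstract knot setting, assume: (i) whenever K is n-adjacent (n > 1) to a fibered knot K' with δ(K) = δ(K'), either K = K' or g(K) > g(K'); (ii) fibered knots satisfy δ = 2g; (iii) genus-1 knots that are n-adjacent to the unknot U for some n > 1 and have trivial Alexander polynomial are equal to U. If g(K) = 1 and K is n-adjacent (n > 1) to some fibered knot K' ≠ K with δ(K) = δ(K'), then a contradiction follows; hence α(K) = 0 for genus-1 knots under these hypotheses. -/

import Mathlib

theorem stmt12_general {Knot : Type*} (g δ : Knot → ℕ) (Fibered : Knot → Prop)
    (Adj : Knot → ℕ → Knot → Prop) (U : Knot)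
    -- the unknot is the unique fibered knot of genus 0
    (hUniq : ∀ J, Fibered J → g J = 0 → J = U)
    -- (i) adjacency to a fibered knot forces K = K' or genus growth
    (hi : ∀ (K K' : Knot) (n : ℕ), 1 < n → Adj K n K' → Fibered K' →
      δ K = δ K' → K = K' ∨ g K' < g K)
    -- (ii) fibered knots satisfy δ = 2g
    (hii : ∀ J, Fibered J → δ J = 2 * g J)
    -- (iii) genus-1 knots n-adjacent (n > 1) to the unknot with trivial
    -- Alexander polynomial are unknotted
    (hiii : ∀ (J : Knot) (n : ℕ), g J = 1 → 1 < n → Adj J n U → δ J = 0 → J = U)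
    (K K' : Knot) (n : ℕ)
    (hgK : g K = 1) (hn : 1 < n) (hne : K' ≠ K) (hfib : Fibered K')
    (hδ : δ K = δ K') (hadj : Adj K n K') :
    False := by
  obtain hKK' | hlt := hi K K' n hn hadj hfib hδ
  · exact hne hKK'.symm
  have hgK' : g K' = 0 := by omega
  have hK'U : K' = U := hUniq K' hfib hgK'
  have hδK : δ K = 0 := by rw [hδ, hii K' hfib, hgK']
  have hKU : K = U := hiii K n hgK hn (hK'U ▸ hadj) hδK
  exact hne (hK'U.trans hKU.symm)

theorem stmt12 {Knot : Type*} (g δ : Knot → ℕ) (Fibered : Knot → Prop)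
    (Adj : Knot → ℕ → Knot → Prop) (U : Knot)
    (hgU : g U = 0) (hδU : δ U = 0) (hfibU : Fibered U)
    -- the unknot is the unique fibered knot of genus 0
    (hUniq : ∀ J, Fibered J → g J = 0 → J = U)
    -- (i) adjacency to a fibered knot forces K = K' or genus growth
    (hi : ∀ (K K' : Knot) (n : ℕ), 1 < n → Adj K n K' → Fibered K' →
      δ K = δ K' → K = K' ∨ g K' < g K)
    -- (ii) fibered knots satisfy δ = 2g
    (hii : ∀ J, Fibered J → δ J = 2 * g J)
    -- (iii) genus-1 knots n-adjacent (n > 1) to the unknot with trivial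
    -- Alexander polynomial are unknotted
    (hiii : ∀ (J : Knot) (n : ℕ), g J = 1 → 1 < n → Adj J n U → δ J = 0 → J = U)
    (K K' : Knot) (n : ℕ)
    (hgK : g K = 1) (hn : 1 < n) (hne : K' ≠ K) (hfib : Fibered K')
    (hδ : δ K = δ K') (hadj : Adj K n K') :
    False :=
  stmt12_general g δ Fibered Adj U hUniq hi hii hiii K K' n hgK hn hne hfib hδ hadj
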